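/- Let z be a nonzero vector in R^n and 1 ≤ k ≤ n. Among all unit vectors x with at most k nonzero entries, the squared distance ‖x - z‖² is minimized by x* = T_k(z)/‖T_k(z)‖, where T_k(z) keeps the k entries of z with largest absolute values and sets all other entries to zero. -/

import Mathlib

/-- number of nonzero entries of a vector (the "ℓ₀-norm"). -/
noncomputable def l0 {n : ℕ} (x : Fin n → ℝ) : ℕ := (Finset.univ.filter fun i => x i ≠ 0).card

/-!
Expanding the square, `∑ (x i - z i)² = 1 - 2 ⟪x, z⟫ + ‖z‖²` for every unit vector `x`, so it
suffices to maximize `⟪x, z⟫`. If `x` is supported on a set `A` of at most `k` indices,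
Cauchy–Schwarz gives `⟪x, z⟫² ≤ ∑_{i ∈ A} z i²`, and this is at most `∑_{i ∈ S} z i²` because
the `k` entries indexed by `S` dominate all others. The normalized truncation attains
`⟪x, z⟫ = √(∑_{i ∈ S} z i²)`.
-/

open Finset

section Dominating

variable {ι M : Type*} [DecidableEq ι] [AddCommMonoid M] [LinearOrder M] [IsOrderedAddMonoid M]

/-- Swapping the indices of `A \ S` for the at least as many indices of `S \ A` can only increase
the sum, since every value on the latter dominates every value on the former. -/
theorem sum_le_sum_of_card_le_of_dominating {f : ι → M} (hf : ∀ i, 0 ≤ f i) {A S : Finset ι}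
    (hdom : ∀ i ∈ S, ∀ j ∉ S, f j ≤ f i) (hcard : #A ≤ #S) :
    ∑ i ∈ A, f i ≤ ∑ i ∈ S, f i := by
  have hsdiff : #(A \ S) ≤ #(S \ A) := by
    have := card_sdiff_add_card_inter A S
    have := card_sdiff_add_card_inter S A
    rw [inter_comm] at this
    omega
  have hswap : ∑ i ∈ A \ S, f i ≤ ∑ i ∈ S \ A, f i := by
    rcases (A \ S).eq_empty_or_nonempty with hempty | hne
    · simpa [hempty] using sum_nonneg fun i _ => hf i
    obtain ⟨j, hj, hjmax⟩ := (A \ S).exists_max_image f hne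
    calc ∑ i ∈ A \ S, f i ≤ #(A \ S) • f j := sum_le_card_nsmul _ _ _ hjmax
      _ ≤ #(S \ A) • f j := nsmul_le_nsmul_left (hf j) hsdiff
      _ ≤ ∑ i ∈ S \ A, f i := card_nsmul_le_sum _ _ _ fun i hi =>
          hdom i (mem_sdiff.mp hi).1 j (mem_sdiff.mp hj).2
  rw [← sum_inter_add_sum_sdiff A S, ← sum_inter_add_sum_sdiff S A, inter_comm S A]
  gcongr

end Dominating

theorem sum_sq_pos_of_dominating {ι : Type*} {z : ι → ℝ} {S : Finset ι} (hz : z ≠ 0)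
    (hS : S.Nonempty) (hdom : ∀ i ∈ S, ∀ j ∉ S, |z j| ≤ |z i|) : 0 < ∑ i ∈ S, z i ^ 2 := by
  refine (sum_nonneg fun i _ => sq_nonneg (z i)).lt_of_ne fun hzero => hz (funext fun j => ?_)
  have hzS : ∀ i ∈ S, z i = 0 := fun i hi =>
    pow_eq_zero_iff two_ne_zero |>.mp <|
      (sum_eq_zero_iff_of_nonneg fun i _ => sq_nonneg (z i)).mp hzero.symm i hi
  by_cases hj : j ∈ S
  · exact hzS j hj
  · obtain ⟨i, hi⟩ := hS
    simpa [hzS i hi] using hdom i hi j hj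

section Vectors

variable {ι : Type*} [Fintype ι]

theorem sum_sub_sq_eq (x z : ι → ℝ) :
    ∑ i, (x i - z i) ^ 2 = ∑ i, x i ^ 2 - 2 * ∑ i, x i * z i + ∑ i, z i ^ 2 := by
  simp only [sub_sq, sum_add_distrib, sum_sub_distrib, mul_sum, mul_assoc]

theorem sq_sum_mul_le_sum_sq_mul_sum_sq_filter_ne_zero (x z : ι → ℝ) :
    (∑ i, x i * z i) ^ 2 ≤
      (∑ i, x i ^ 2) * ∑ i ∈ univ.filter (fun i => x i ≠ 0), z i ^ 2 := by
  have hxz : ∑ i, x i * z i = ∑ i ∈ univ.filter (fun i => x i ≠ 0), x i * z i :=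
    (sum_filter_of_ne fun i _ h => left_ne_zero_of_mul h).symm
  have hx : ∑ i, x i ^ 2 = ∑ i ∈ univ.filter (fun i => x i ≠ 0), x i ^ 2 :=
    (sum_filter_of_ne fun i _ h => by simpa using h).symm
  rw [hxz, hx]
  exact sum_mul_sq_le_sq_mul_sq _ x z

variable [DecidableEq ι]

theorem sum_sq_ite_mem (S : Finset ι) (z : ι → ℝ) :
    ∑ i, (if i ∈ S then z i else 0) ^ 2 = ∑ i ∈ S, z i ^ 2 := by
  simp [ite_pow, sum_ite_mem]

theorem sum_ite_mem_mul (S : Finset ι) (z : ι → ℝ) :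
    ∑ i, (if i ∈ S then z i else 0) * z i = ∑ i ∈ S, z i ^ 2 := by
  simp [ite_mul, sum_ite_mem, sq]

end Vectors

theorem l0_le_card_of_eq_zero {n : ℕ} {x : Fin n → ℝ} {S : Finset (Fin n)}
    (hx : ∀ i ∉ S, x i = 0) : l0 x ≤ #S :=
  card_le_card fun i hi => by_contra fun hiS => (mem_filter.mp hi).2 (hx i hiS)

theorem sum_mul_le_sqrt_sum_sq_of_dominating {n : ℕ} {x z : Fin n → ℝ} {S : Finset (Fin n)}
    (hdom : ∀ i ∈ S, ∀ j ∉ S, |z j| ≤ |z i|) (hx0 : l0 x ≤ #S)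
    (hx1 : ∑ i, x i ^ 2 = 1) :
    ∑ i, x i * z i ≤ √(∑ i ∈ S, z i ^ 2) := by
  have hsupport : ∑ i ∈ univ.filter (fun i => x i ≠ 0), z i ^ 2 ≤ ∑ i ∈ S, z i ^ 2 :=
    sum_le_sum_of_card_le_of_dominating (fun i => sq_nonneg (z i))
      (fun i hi j hj => sq_le_sq.mpr (hdom i hi j hj)) hx0
  apply Real.le_sqrt_of_sq_le
  calc (∑ i, x i * z i) ^ 2
      ≤ (∑ i, x i ^ 2) * ∑ i ∈ univ.filter (fun i => x i ≠ 0), z i ^ 2 :=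
        sq_sum_mul_le_sum_sq_mul_sum_sq_filter_ne_zero x z
    _ ≤ ∑ i ∈ S, z i ^ 2 := by rwa [hx1, one_mul]

theorem stmt0_general {n : ℕ} (z : Fin n → ℝ) (hz : z ≠ 0) (k : ℕ) (hk1 : 1 ≤ k)
    (S : Finset (Fin n)) (hScard : S.card = k)
    (hStop : ∀ i ∈ S, ∀ j ∉ S, |z j| ≤ |z i|)
    (T : Fin n → ℝ) (hT : T = fun i => if i ∈ S then z i else 0)
    (xstar : Fin n → ℝ) (hx : xstar = fun i => T i / Real.sqrt (∑ j, T j ^ 2)) :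
    l0 xstar ≤ k ∧ (∑ i, xstar i ^ 2) = 1 ∧
      ∀ x : Fin n → ℝ, l0 x ≤ k → (∑ i, x i ^ 2) = 1 →
        (∑ i, (xstar i - z i) ^ 2) ≤ (∑ i, (x i - z i) ^ 2) := by
  subst hT hx hScard
  rw [sum_sq_ite_mem]
  have hpos : 0 < ∑ i ∈ S, z i ^ 2 := sum_sq_pos_of_dominating hz (card_pos.mp hk1) hStop
  have hnorm : ∑ i, ((if i ∈ S then z i else 0) / √(∑ i ∈ S, z i ^ 2)) ^ 2 = 1 := by
    simp only [div_pow, ← sum_div, sum_sq_ite_mem, Real.sq_sqrt hpos.le, div_self hpos.ne']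
  have hinner : ∑ i, (if i ∈ S then z i else 0) / √(∑ i ∈ S, z i ^ 2) * z i
      = √(∑ i ∈ S, z i ^ 2) := by
    simp only [div_mul_eq_mul_div, ← sum_div, sum_ite_mem_mul, Real.div_sqrt]
  refine ⟨l0_le_card_of_eq_zero fun i hi => by simp [hi], hnorm, fun x hx0 hx1 => ?_⟩
  have hx := sum_mul_le_sqrt_sum_sq_of_dominating hStop hx0 hx1
  rw [sum_sub_sq_eq, sum_sub_sq_eq, hnorm, hx1, hinner]
  linarith

/-- Proposition 1: for a nonzero `z` and `1 ≤ k ≤ n`, among all unit vectors `x`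
with at most `k` nonzero entries, `‖x - z‖²` is minimized by `T_k(z)/‖T_k(z)‖`,
where `T_k(z)` keeps the `k` entries of `z` of largest absolute value (encoded
by an index set `S` of cardinality `k` dominating in absolute value) and zeros
out the rest. -/
theorem stmt0 {n : ℕ} (z : Fin n → ℝ) (hz : z ≠ 0) (k : ℕ) (hk1 : 1 ≤ k) (hkn : k ≤ n)
    (S : Finset (Fin n)) (hScard : S.card = k)
    (hStop : ∀ i ∈ S, ∀ j ∉ S, |z j| ≤ |z i|)
    (T : Fin n → ℝ) (hT : T = fun i => if i ∈ S then z i else 0)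
    (xstar : Fin n → ℝ) (hx : xstar = fun i => T i / Real.sqrt (∑ j, T j ^ 2)) :
    l0 xstar ≤ k ∧ (∑ i, xstar i ^ 2) = 1 ∧
      ∀ x : Fin n → ℝ, l0 x ≤ k → (∑ i, x i ^ 2) = 1 →
        (∑ i, (xstar i - z i) ^ 2) ≤ (∑ i, (x i - z i) ^ 2) :=
  stmt0_general z hz k hk1 S hScard hStop T hT xstar hx
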